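/- arXiv:2305.14047 — 7 statements merged into one kernel-verified Lean document; each statement's English description precedes it below -/
import Mathlib

section
/- For γ ≥ 0.5, any γ-quasi-clique has diameter at most 2: for any two vertices u, v in a γ-quasi-clique G[H], either u and v are adjacent or they share a common neighbor in H. -/
open Finset
open scoped Classical

variable {V : Type*}

/-- Number of neighbors of `v` within `H`. -/
noncomputable def nbr (G : SimpleGraph V) (v : V) (H : Finset V) : ℕ :=
  (H.filter (fun u => G.Adj v u)).card

/-- Number of non-neighbors of `v` within `H` (a vertex is a non-neighbor of itself). -/
noncomputable def nonNbr (G : SimpleGraph V) (v : V) (H : Finset V) : ℕ :=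
  (H.filter (fun u => ¬ G.Adj v u)).card

/-- `Δ(H)`: the maximum number of non-neighbors of a vertex of `H` within `H` (0 for `∅`). -/
noncomputable def maxDisc (G : SimpleGraph V) (H : Finset V) : ℕ :=
  H.sup (fun v => nonNbr G v H)

/-- `τ(x) = ⌊(1-γ)x + γ⌋`. -/
noncomputable def tau (γ x : ℝ) : ℤ := ⌊(1 - γ) * x + γ⌋

/-- `G[H]` is a `γ`-quasi-clique: the induced subgraph is connected and every
vertex of `H` has at least `⌈γ(|H|-1)⌉` neighbors within `H`. -/
def IsQC (G : SimpleGraph V) (γ : ℝ) (H : Finset V) : Prop :=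
  (G.induce (H : Set V)).Connected ∧
    ∀ v ∈ H, (⌈γ * ((H.card : ℝ) - 1)⌉ : ℤ) ≤ (nbr G v H : ℤ)

/-- For `γ ≥ 0.5`, any `γ`-quasi-clique has diameter at most 2. -/
theorem quasi_clique_diameter_two (G : SimpleGraph V) (γ : ℝ)
    (hγ : (1/2 : ℝ) ≤ γ) (hγ1 : γ ≤ 1) (H : Finset V) (h : IsQC G γ H)
    {u v : V} (hu : u ∈ H) (hv : v ∈ H) (huv : u ≠ v) :
    G.Adj u v ∨ ∃ w ∈ H, G.Adj u w ∧ G.Adj w v := by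
  by_contra hcon
  push_neg at hcon
  obtain ⟨hne, hnw⟩ := hcon
  have hdisj : Disjoint (H.filter (fun w => G.Adj u w)) (H.filter (fun w => G.Adj v w)) := by
    rw [Finset.disjoint_left]
    intro w hwA hwB
    simp only [Finset.mem_filter] at hwA hwB
    exact hnw w hwA.1 hwA.2 hwB.2.symm
  have hsub : (H.filter (fun w => G.Adj u w)) ∪ (H.filter (fun w => G.Adj v w)) ⊆
      (H.erase u).erase v := by
    intro w hw1
    have hw2 := Finset.mem_union.mp hw1
    clear hw1
    rcases hw2 with hw | hw
    · simp only [Finset.mem_filter] at hw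
      refine Finset.mem_erase.mpr ⟨?_, Finset.mem_erase.mpr ⟨?_, hw.1⟩⟩
      · rintro rfl; exact hne hw.2
      · rintro rfl; exact G.irrefl hw.2
    · simp only [Finset.mem_filter] at hw
      refine Finset.mem_erase.mpr ⟨?_, Finset.mem_erase.mpr ⟨?_, hw.1⟩⟩
      · rintro rfl; exact G.irrefl hw.2
      · rintro rfl; exact hne hw.2.symm
  have hn2 : 2 ≤ H.card := by
    have hsub2 : ({u, v} : Finset V) ⊆ H := by
      intro x hx
      rcases Finset.mem_insert.mp hx with rfl | hx
      · exact hu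
      · rw [Finset.mem_singleton] at hx; subst hx; exact hv
    calc 2 = ({u, v} : Finset V).card := (Finset.card_pair huv).symm
    _ ≤ H.card := Finset.card_le_card hsub2
  have hcard : nbr G u H + nbr G v H ≤ H.card - 2 := by
    have h2 := Finset.card_le_card hsub
    rw [Finset.card_union_of_disjoint hdisj] at h2
    have h1 : ((H.erase u).erase v).card = H.card - 2 := by
      rw [Finset.card_erase_of_mem (Finset.mem_erase.mpr ⟨huv.symm, hv⟩),
        Finset.card_erase_of_mem hu]
      omega
    rw [h1] at h2
    exact h2
  have key : ∀ w ∈ H, γ * ((H.card : ℝ) - 1) ≤ (nbr G w H : ℝ) := by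
    intro w hw
    have h3 := h.2 w hw
    have h4 : (γ * ((H.card : ℝ) - 1)) ≤ ((⌈γ * ((H.card : ℝ) - 1)⌉ : ℤ) : ℝ) := Int.le_ceil _
    have h5 : ((⌈γ * ((H.card : ℝ) - 1)⌉ : ℤ) : ℝ) ≤ (nbr G w H : ℝ) := by exact_mod_cast h3
    linarith
  have hAge := key u hu
  have hBge := key v hv
  have hcardR : (nbr G u H : ℝ) + (nbr G v H : ℝ) ≤ (H.card : ℝ) - 2 := by
    have h6 : ((nbr G u H + nbr G v H : ℕ) : ℝ) ≤ ((H.card - 2 : ℕ) : ℝ) := by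
      exact_mod_cast hcard
    rw [Nat.cast_sub hn2] at h6
    push_cast at h6
    linarith
  have hn1 : (1 : ℝ) ≤ (H.card : ℝ) - 1 := by
    have : (2 : ℝ) ≤ (H.card : ℝ) := by exact_mod_cast hn2
    linarith
  nlinarith [hAge, hBge, hcardR, hn1, hγ]
end

section
/- Size upper bound for quasi-cliques under a branch: let (S,C,D) be a branch with S nonempty, and suppose H is a vertex set with S ⊆ H ⊆ S∪C such that G[H] is a γ-quasi-clique. Then |H| ≤ min{|S∪C|, d_min/γ + 1}, where d_min = min_{v∈S} δ(v, S∪C). -/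
open Finset
open scoped Classical

variable {V : Type*}

/-- Size upper bound for quasi-cliques under a branch `(S, C)` with `S` nonempty. -/
theorem size_upper_bound (G : SimpleGraph V) (γ : ℝ) (hγ0 : 0 < γ) (hγ1 : γ ≤ 1)
    (S C H : Finset V) (hS : S.Nonempty) (hdisj : Disjoint S C)
    (h1 : S ⊆ H) (h2 : H ⊆ S ∪ C) (hqc : IsQC G γ H) :
    (H.card : ℝ) ≤
      min ((S ∪ C).card : ℝ)
        ((S.inf' hS (fun v => nbr G v (S ∪ C)) : ℝ) / γ + 1) := by
  refine le_min (by exact_mod_cast Finset.card_le_card h2) ?_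
  obtain ⟨v, hvS, hv⟩ := S.exists_mem_eq_inf' hS (fun v => (nbr G v (S ∪ C) : ℝ))
  rw [hv]
  have hvH : v ∈ H := h1 hvS
  have key : (⌈γ * ((H.card : ℝ) - 1)⌉ : ℤ) ≤ (nbr G v H : ℤ) := hqc.2 v hvH
  have hmono : nbr G v H ≤ nbr G v (S ∪ C) :=
    Finset.card_le_card (Finset.filter_subset_filter _ h2)
  have h3 : γ * ((H.card : ℝ) - 1) ≤ (nbr G v (S ∪ C) : ℝ) := by
    calc γ * ((H.card : ℝ) - 1) ≤ (⌈γ * ((H.card : ℝ) - 1)⌉ : ℤ) := Int.le_ceil _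
    _ ≤ ((nbr G v (S ∪ C) : ℤ) : ℝ) := by exact_mod_cast key.trans (by exact_mod_cast hmono)
    _ = _ := by push_cast; ring
  rw [← sub_le_iff_le_add, le_div_iff₀ hγ0]
  linarith
end

section
/- Necessary condition for a branch to hold a quasi-clique: if there is a vertex set H with S ⊆ H ⊆ S∪C such that G[H] is a γ-quasi-clique, then Δ(S) ≤ τ(σ), where σ is any upper bound on |H| (e.g., σ = |S∪C|), τ(x) = ⌊(1-γ)x + γ⌋, and Δ(S) = max_{v∈S} δ̄(v,S). -/
open Finset
open scoped Classical

variable {V : Type*}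

/-- Necessary condition for a branch to hold a quasi-clique: if some quasi-clique
`G[H]` with `S ⊆ H ⊆ S ∪ C` and `|H| ≤ σ` exists, then `Δ(S) ≤ τ(σ)`. -/
theorem branch_necessary_condition (G : SimpleGraph V) (γ : ℝ)
    (hγ0 : 0 < γ) (hγ1 : γ ≤ 1) (S C H : Finset V) (σ : ℝ)
    (h1 : S ⊆ H) (h2 : H ⊆ S ∪ C) (hσ : (H.card : ℝ) ≤ σ)
    (hqc : IsQC G γ H) :
    (maxDisc G S : ℤ) ≤ tau γ σ := by

  -- H is nonempty since the induced graph is connected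
  obtain ⟨⟨w, hw⟩⟩ := hqc.1.nonempty
  rw [Finset.mem_coe] at hw
  have hH1 : (1 : ℝ) ≤ H.card := by
    have := Finset.card_pos.mpr ⟨w, hw⟩
    exact_mod_cast this
  have hγ' : (0 : ℝ) ≤ 1 - γ := by linarith
  have hmain : ∀ v ∈ H, ((nonNbr G v H : ℤ) : ℝ) ≤ (1 - γ) * σ + γ := by
    intro v hv
    have hsum : nonNbr G v H + nbr G v H = H.card := by
      simpa [nonNbr, nbr] using
        Finset.card_filter_add_card_filter_not (s := H)
          (p := fun u => ¬ G.Adj v u)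
    have hdeg : (⌈γ * ((H.card : ℝ) - 1)⌉ : ℤ) ≤ (nbr G v H : ℤ) := hqc.2 v hv
    have hdeg' : γ * ((H.card : ℝ) - 1) ≤ (nbr G v H : ℝ) := by
      have := Int.le_ceil (γ * ((H.card : ℝ) - 1))
      calc γ * ((H.card : ℝ) - 1) ≤ ((⌈γ * ((H.card : ℝ) - 1)⌉ : ℤ) : ℝ) := this
        _ ≤ (nbr G v H : ℝ) := by exact_mod_cast hdeg
    have hnn : (nonNbr G v H : ℝ) = (H.card : ℝ) - (nbr G v H : ℝ) := by
      have : (nonNbr G v H : ℝ) + (nbr G v H : ℝ) = (H.card : ℝ) := by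
        exact_mod_cast congrArg (Nat.cast (R := ℝ)) hsum
      linarith
    have h3 : (nonNbr G v H : ℝ) ≤ (1 - γ) * (H.card : ℝ) + γ := by
      rw [hnn]; nlinarith
    have h4 : (1 - γ) * (H.card : ℝ) ≤ (1 - γ) * σ :=
      mul_le_mul_of_nonneg_left hσ hγ'
    push_cast
    linarith
  rcases S.eq_empty_or_nonempty with hS | hS
  · simp only [hS, maxDisc, Finset.sup_empty]
    simp only [tau]
    rw [Int.le_floor]
    have : (1 - γ) * 1 ≤ (1 - γ) * σ :=
      mul_le_mul_of_nonneg_left (le_trans hH1 hσ) hγ'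
    norm_num
    linarith
  · obtain ⟨v, hvS, hveq⟩ := Finset.exists_mem_eq_sup S hS (fun v => nonNbr G v S)
    have hmono : nonNbr G v S ≤ nonNbr G v H := by
      apply Finset.card_le_card
      exact Finset.filter_subset_filter _ h1
    have hvH := hmain v (h1 hvS)
    rw [maxDisc, hveq]
    rw [tau, Int.le_floor]
    calc ((nonNbr G v S : ℤ) : ℝ) ≤ ((nonNbr G v H : ℤ) : ℝ) := by exact_mod_cast hmono
      _ ≤ (1 - γ) * σ + γ := hvH
end

section
/- Refinement Rule 1 soundness: let (S,C) be a branch, τ* ≥ τ(|H|) for every candidate quasi-clique size |H| under the branch, and v ∈ C with Δ(S ∪ {v}) > τ*. Then no γ-quasi-clique G[H] with S ⊆ H ⊆ S∪C contains v. -/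
open Finset
open scoped Classical

variable {V : Type*}

lemma nonNbr_mono (G : SimpleGraph V) (u : V) {H' H : Finset V} (h : H' ⊆ H) :
    nonNbr G u H' ≤ nonNbr G u H :=
  Finset.card_le_card (Finset.filter_subset_filter _ h)

lemma maxDisc_mono (G : SimpleGraph V) {H' H : Finset V} (h : H' ⊆ H) :
    maxDisc G H' ≤ maxDisc G H :=
  Finset.sup_le fun u hu =>
    le_trans (nonNbr_mono G u h) (Finset.le_sup (f := fun w => nonNbr G w H) (h hu))

lemma nbr_add_nonNbr (G : SimpleGraph V) (u : V) (H : Finset V) :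
    nbr G u H + nonNbr G u H = H.card := by
  simpa [nbr, nonNbr] using
    Finset.card_filter_add_card_filter_not (s := H) (p := fun x => G.Adj u x)

lemma maxDisc_le_tau (G : SimpleGraph V) (γ : ℝ) (hγ0 : 0 < γ) {H : Finset V}
    (hQC : IsQC G γ H) : (maxDisc G H : ℤ) ≤ tau γ (H.card : ℝ) := by
  rcases H.eq_empty_or_nonempty with rfl | hne
  · simp only [maxDisc, Finset.sup_empty, Finset.card_empty, Nat.cast_zero, tau]
    exact_mod_cast Int.floor_nonneg.mpr (by nlinarith)
  obtain ⟨u, hu, hEq⟩ := Finset.exists_mem_eq_sup H hne (fun v => nonNbr G v H)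
  have hnbr := hQC.2 u hu
  have hsum := nbr_add_nonNbr G u H
  have key : (nonNbr G u H : ℤ) ≤ (H.card : ℤ) - ⌈γ * ((H.card : ℝ) - 1)⌉ := by
    omega
  have hfloor : (H.card : ℤ) - ⌈γ * ((H.card : ℝ) - 1)⌉ = tau γ (H.card : ℝ) := by
    rw [tau, show (1 - γ) * (H.card : ℝ) + γ = (H.card : ℤ) + -(γ * ((H.card : ℝ) - 1)) by
      push_cast; ring, Int.floor_intCast_add, Int.floor_neg]
    ring
  rw [maxDisc, hEq]
  omega

/-- Refinement Rule 1 soundness: a candidate `v` with `Δ(S ∪ {v}) > τ*` belongs to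
no quasi-clique under the branch. -/
theorem refinement_rule1_sound (G : SimpleGraph V) (γ : ℝ)
    (hγ0 : 0 < γ) (hγ1 : γ ≤ 1) (S C : Finset V) (τstar : ℤ)
    (hτ : ∀ H : Finset V, S ⊆ H → H ⊆ S ∪ C → IsQC G γ H → tau γ (H.card : ℝ) ≤ τstar)
    (v : V) (hv : v ∈ C) (hΔ : τstar < (maxDisc G (insert v S) : ℤ)) :
    ∀ H : Finset V, S ⊆ H → H ⊆ S ∪ C → IsQC G γ H → v ∉ H := by
  intro H hS hC hQC hvH
  have hins : insert v S ⊆ H := Finset.insert_subset hvH hS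
  have h1 : (maxDisc G (insert v S) : ℤ) ≤ (maxDisc G H : ℤ) := by
    exact_mod_cast maxDisc_mono G hins
  have h2 := maxDisc_le_tau G γ hγ0 hQC
  have h3 := hτ H hS hC hQC
  omega
end

section
/- Refinement Rule 2 soundness: let (S,C) be a branch and θ a size threshold; let τ* ≥ τ(|H|) for every quasi-clique G[H] with S ⊆ H ⊆ S∪C and |H| ≥ θ. If v ∈ C satisfies δ(v, S∪C) < θ - τ*, then no γ-quasi-clique G[H] with |H| ≥ θ and S ⊆ H ⊆ S∪C contains v. -/
open Finset
open scoped Classical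

variable {V : Type*}

/-- Refinement Rule 2 soundness: a candidate `v` with `δ(v, S∪C) < θ - τ*` belongs
to no quasi-clique of size at least `θ` under the branch. -/
theorem refinement_rule2_sound (G : SimpleGraph V) (γ : ℝ)
    (hγ0 : 0 < γ) (hγ1 : γ ≤ 1) (S C : Finset V) (θ : ℕ) (hθ : 1 ≤ θ) (τstar : ℤ)
    (hτ : ∀ H : Finset V, S ⊆ H → H ⊆ S ∪ C → IsQC G γ H → θ ≤ H.card →
      tau γ (H.card : ℝ) ≤ τstar)
    (v : V) (hv : v ∈ C) (hdeg : (nbr G v (S ∪ C) : ℤ) < (θ : ℤ) - τstar) :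
    ∀ H : Finset V, S ⊆ H → H ⊆ S ∪ C → IsQC G γ H → θ ≤ H.card → v ∉ H := by
  intro H hSH hHC hQC hcard hvH
  have h1 : nbr G v H ≤ nbr G v (S ∪ C) :=
    Finset.card_le_card (Finset.filter_subset_filter _ hHC)
  have h2 := hQC.2 v hvH
  have htn : tau γ (H.card : ℝ) ≤ τstar := hτ H hSH hHC hQC hcard
  have key : (H.card : ℤ) - tau γ (H.card : ℝ) ≤ ⌈γ * ((H.card : ℝ) - 1)⌉ := by
    have hf := Int.sub_one_lt_floor ((1 - γ) * (H.card : ℝ) + γ)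
    have hc := Int.le_ceil (γ * ((H.card : ℝ) - 1))
    have hlt : (H.card : ℤ) - tau γ (H.card : ℝ) < ⌈γ * ((H.card : ℝ) - 1)⌉ + 1 := by
      rw [← @Int.cast_lt ℝ]
      unfold tau
      push_cast
      nlinarith
    omega
  have hθn : (θ : ℤ) ≤ (H.card : ℤ) := by exact_mod_cast hcard
  have h1' : (nbr G v H : ℤ) ≤ (nbr G v (S ∪ C) : ℤ) := by exact_mod_cast h1
  omega
end

section
/- Sym-SE branch pruning bound (Case 1): let S,C be disjoint sets, let the pivot v̂ ∈ S satisfy δ̄(v̂, S∪C) > τ* where τ* is a nonnegative integer, and set a = τ* - δ̄(v̂,S) and b = δ̄(v̂,C), so a < b. Order C so that its first b elements are exactly the non-neighbors of v̂ in C. Then for every i ≥ a+2, the set S_i = S ∪ {v_1,...,v_{i-1}} satisfies Δ(S_i) ≥ τ* + 1 > τ*. -/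
open Finset
open scoped Classical

variable {V : Type*}

theorem nonNbr_union_of_disjoint (G : SimpleGraph V) (v : V) {A B : Finset V}
    (h : Disjoint A B) : nonNbr G v (A ∪ B) = nonNbr G v A + nonNbr G v B := by
  rw [nonNbr, filter_union, card_union_of_disjoint (h.mono (filter_subset _ _) (filter_subset _ _))]
  rfl

theorem nonNbr_le_maxDisc (G : SimpleGraph V) {v : V} {H : Finset V} (hv : v ∈ H) :
    nonNbr G v H ≤ maxDisc G H :=
  le_sup (f := fun u => nonNbr G u H) hv

theorem List.min_le_card_filter_take {α : Type*} {l : List α} (hl : l.Nodup) {p : α → Prop}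
    [DecidablePred p] (hp : (l.take (l.toFinset.filter p).card).toFinset = l.toFinset.filter p)
    (n : ℕ) : min n (l.toFinset.filter p).card ≤ ((l.take n).toFinset.filter p).card := by
  set b := (l.toFinset.filter p).card
  have hb : b ≤ l.length := (card_filter_le _ _).trans (List.toFinset_card_le l)
  have hsub : (l.take (min n b)).toFinset ⊆ (l.take n).toFinset.filter p := by
    intro x hx
    rw [List.mem_toFinset] at hx
    have hxb : x ∈ (l.take b).toFinset :=
      List.mem_toFinset.2 ((List.take_prefix_take_left (min_le_right _ _)).subset hx)
    rw [hp, Finset.mem_filter] at hxb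
    exact Finset.mem_filter.2 ⟨List.mem_toFinset.2
      ((List.take_prefix_take_left (min_le_left _ _)).subset hx), hxb.2⟩
  calc min n b = (l.take (min n b)).toFinset.card := by
        rw [List.toFinset_card_of_nodup (hl.sublist (List.take_sublist _ _)), List.length_take]
        omega
    _ ≤ _ := card_le_card hsub

/-- Sym-SE branch pruning bound (Case 1): with pivot `v̂ ∈ S`,
`a = τ* - δ̄(v̂,S)` and `b = δ̄(v̂,C)`, we get `a < b` and every branch
`B_i` with `i ≥ a + 2` satisfies `Δ(S_i) ≥ τ* + 1 > τ*`. -/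
theorem symSE_case1_pruning (G : SimpleGraph V) (S : Finset V) (l : List V)
    (hdisj : Disjoint S l.toFinset) (hnd : l.Nodup)
    (vhat : V) (hvS : vhat ∈ S) (τstar : ℕ)
    (hgt : τstar < nonNbr G vhat (S ∪ l.toFinset))
    (hle : nonNbr G vhat S ≤ τstar)
    (horder : (l.take (nonNbr G vhat l.toFinset)).toFinset =
      l.toFinset.filter (fun u => ¬ G.Adj vhat u)) :
    (τstar - nonNbr G vhat S) < nonNbr G vhat l.toFinset ∧
      ∀ i : ℕ, (τstar - nonNbr G vhat S) + 2 ≤ i →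
        τstar + 1 ≤ maxDisc G (S ∪ (l.take (i - 1)).toFinset) := by
  rw [nonNbr_union_of_disjoint G vhat hdisj] at hgt
  refine ⟨by omega, fun i hi => ?_⟩
  set T := (l.take (i - 1)).toFinset
  have hT : min (i - 1) (nonNbr G vhat l.toFinset) ≤ nonNbr G vhat T :=
    List.min_le_card_filter_take hnd horder (i - 1)
  have hTS : Disjoint S T :=
    hdisj.mono_right fun x hx =>
      List.mem_toFinset.2 (List.take_subset _ _ (List.mem_toFinset.1 hx))
  calc τstar + 1 ≤ nonNbr G vhat S + nonNbr G vhat T := by omega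
    _ = nonNbr G vhat (S ∪ T) := (nonNbr_union_of_disjoint G vhat hTS).symm
    _ ≤ maxDisc G (S ∪ T) := nonNbr_le_maxDisc G (mem_union_left T hvS)
end

section
/- Non-maximality lemma for Hybrid-SE branching: let (S,C) be a branch and v̂ ∈ C with δ̄(v̂, S) = 0 (v̂ is adjacent to every vertex of S). If G[H] is a γ-quasi-clique with S ⊆ H ⊆ S∪C such that H contains no non-neighbor of v̂ from C (in particular v̂ ∉ H), then G[H ∪ {v̂}] is also a γ-quasi-clique; hence G[H] is not maximal. -/
open Finset
open scoped Classical

variable {V : Type*}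

/-- Non-maximality lemma for Hybrid-SE branching: if the pivot `v̂ ∈ C` is
adjacent to all of `S` and a quasi-clique `H` under the branch avoids all
non-neighbors of `v̂` from `C`, then `H ∪ {v̂}` is also a quasi-clique, so `H`
is not maximal. -/
theorem hybridSE_nonmaximal (G : SimpleGraph V) (γ : ℝ)
    (hγ0 : 0 < γ) (hγ1 : γ ≤ 1) (S C : Finset V) (hdisj : Disjoint S C)
    (vhat : V) (hvC : vhat ∈ C) (hS0 : nonNbr G vhat S = 0)
    (H : Finset V) (h1 : S ⊆ H) (h2 : H ⊆ S ∪ C) (hqc : IsQC G γ H)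
    (hexcl : ∀ u ∈ C, ¬ G.Adj vhat u → u ∉ H) :
    IsQC G γ (insert vhat H) ∧ ∃ H' : Finset V, H ⊂ H' ∧ IsQC G γ H' := by
  have hadj : ∀ u ∈ H, G.Adj vhat u := by
    intro u hu
    rcases Finset.mem_union.1 (h2 hu) with hS | hC
    · by_contra hna
      have : u ∈ S.filter (fun u => ¬ G.Adj vhat u) := Finset.mem_filter.2 ⟨hS, hna⟩
      have := Finset.card_pos.2 ⟨u, this⟩
      unfold nonNbr at hS0
      omega
    · by_contra hna
      exact hexcl u hC hna hu
  have hvH : vhat ∉ H := fun h => G.irrefl (hadj vhat h)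
  have hcard : (insert vhat H).card = H.card + 1 := Finset.card_insert_of_notMem hvH
  have hceil : (⌈γ⌉ : ℤ) = 1 := by
    refine le_antisymm (Int.ceil_le.2 (by simpa using hγ1)) (Int.ceil_pos.2 hγ0)
  have hQC : IsQC G γ (insert vhat H) := by
    constructor
    · -- connectedness via vhat adjacent to everything
      have hvmem : vhat ∈ ((insert vhat H : Finset V) : Set V) := by simp
      haveI : Nonempty ((insert vhat H : Finset V) : Set V) := ⟨⟨vhat, hvmem⟩⟩
      refine SimpleGraph.Connected.mk ?_
      intro a b
      have key : ∀ a : ((insert vhat H : Finset V) : Set V),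
          (G.induce _).Reachable a ⟨vhat, hvmem⟩ := by
        rintro ⟨a, ha⟩
        rcases Finset.mem_insert.1 (by simpa using ha) with rfl | haH
        · exact SimpleGraph.Reachable.refl _
        · exact SimpleGraph.Adj.reachable (by simpa using (hadj a haH).symm)
      exact (key a).trans (key b).symm
    · intro v hv
      rcases Finset.mem_insert.1 hv with hcase | hvH'
      · -- the pivot: adjacent to all of H
        rw [hcase]
        have hfilter : (insert vhat H).filter (fun u => G.Adj vhat u) = H := by
          rw [Finset.filter_insert, if_neg (G.irrefl)]
          exact Finset.filter_true_of_mem fun u hu => hadj u hu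
        have hn : nbr G vhat (insert vhat H) = H.card := by
          simp [nbr, hfilter]
        rw [hn, hcard]
        push_cast
        have : γ * ((H.card : ℝ) + 1 - 1) ≤ (H.card : ℝ) := by
          have := Nat.cast_nonneg (α := ℝ) H.card
          nlinarith
        calc (⌈γ * ((H.card : ℝ) + 1 - 1)⌉ : ℤ) ≤ ⌈(H.card : ℝ)⌉ := Int.ceil_le_ceil this
          _ = H.card := by simp
      · -- a vertex of H: gains one neighbor (vhat)
        have hn : nbr G v (insert vhat H) = nbr G v H + 1 := by
          unfold nbr
          rw [Finset.filter_insert, if_pos (hadj v hvH').symm,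
            Finset.card_insert_of_notMem (fun h => hvH (Finset.mem_filter.1 h).1)]
        have hold := hqc.2 v hvH'
        rw [hn, hcard]
        push_cast
        have harith : γ * ((H.card : ℝ) + 1 - 1) = γ * ((H.card : ℝ) - 1) + γ := by ring
        calc (⌈γ * ((H.card : ℝ) + 1 - 1)⌉ : ℤ)
            ≤ ⌈γ * ((H.card : ℝ) - 1)⌉ + ⌈γ⌉ := by rw [harith]; exact Int.ceil_add_le _ _
          _ = ⌈γ * ((H.card : ℝ) - 1)⌉ + 1 := by rw [hceil]
          _ ≤ (nbr G v H : ℤ) + 1 := by omega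
  exact ⟨hQC, insert vhat H, Finset.ssubset_insert hvH, hQC⟩
end
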